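/- Let S be a bounded linear operator on the real Banach space ℓ¹ with matrix entries t_{ij} = (S f_j)_i. Suppose: (1) S is quasinilpotent (spectral radius 0); (2) S has no nontrivial closed invariant ideal; (3) the bounded operator S⁻ on ℓ¹ whose matrix entries are max(−t_{ij}, 0) is compact. Then the positive part S⁺, i.e. the bounded operator on ℓ¹ whose matrix entries are max(t_{ij}, 0), has a nontrivial closed invariant subspace. -/

import Mathlib

/-!
`S⁺` has a nonnegative matrix. If no power of `S⁺` has a positive diagonal entry at `0`, the
indices reachable from `0` in the graph of `S⁺` support a closed invariant subspace (or
`S⁺ f₀ = 0`). Otherwise `‖(S⁺) ^ m f₀‖` grows exponentially; at its critical growth rate `r > 0`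
the partial Neumann sums `∑ (S⁺ / l) ^ m f₀`, whose `ℓ¹` norms add up by positivity, are
approximate eigenvectors of `S⁺`. As `S = S⁺ - S⁻` is quasinilpotent, `r - S` is invertible, and
compactness of `S⁻` makes a subsequence of the approximate eigenvectors converge to an
eigenvector, whose span is invariant.
-/

open Filter Topology

section Operators

variable {𝕜 E : Type*} [NontriviallyNormedField 𝕜] [NormedAddCommGroup E] [NormedSpace 𝕜 E]

def HasNontrivialInvariantSubspace (T : E →L[𝕜] E) : Prop :=
  ∃ J : Submodule 𝕜 E, IsClosed (J : Set E) ∧ J ≠ ⊥ ∧ J ≠ ⊤ ∧ ∀ x ∈ J, T x ∈ J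

def IsApproxEigenvalue (T : E →L[𝕜] E) (r : 𝕜) : Prop :=
  ∀ ε > 0, ∃ x : E, ‖x‖ = 1 ∧ ‖T x - r • x‖ ≤ ε

theorem hasNontrivialInvariantSubspace_of_eigenvector [CompleteSpace 𝕜]
    (hE : ¬ FiniteDimensional 𝕜 E) {T : E →L[𝕜] E} {v : E} {r : 𝕜} (hv : v ≠ 0)
    (hTv : T v = r • v) : HasNontrivialInvariantSubspace T := by
  refine ⟨𝕜 ∙ v, Submodule.closed_of_finiteDimensional _, ?_, ?_, ?_⟩
  · exact (Submodule.span_singleton_eq_bot.not).mpr hv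
  · intro htop
    exact hE (Module.Finite.equiv (LinearEquiv.ofTop _ htop))
  · intro x hx
    obtain ⟨t, rfl⟩ := Submodule.mem_span_singleton.mp hx
    rw [map_smul, hTv, smul_comm]
    exact Submodule.smul_mem _ _ hx

theorem spectrum_subset_zero_of_tendsto {A : Type*} [NormedRing A] [NormedAlgebra 𝕜 A]
    [CompleteSpace A] [NormOneClass A] {a : A}
    (ha : Tendsto (fun n : ℕ => ‖a ^ n‖ ^ (1 / (n : ℝ))) atTop (𝓝 0)) :
    spectrum 𝕜 a ⊆ {0} := by
  intro k hk
  have hle : ∀ n : ℕ, n ≠ 0 → ‖k‖ ≤ ‖a ^ n‖ ^ (1 / (n : ℝ)) := fun n hn => by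
    have hpow : ‖k‖ ^ n ≤ ‖a ^ n‖ := by
      simpa [norm_pow] using spectrum.norm_le_norm_of_mem (spectrum.pow_mem_pow a n hk)
    calc ‖k‖ = (‖k‖ ^ n) ^ (1 / (n : ℝ)) := by
          rw [one_div, Real.pow_rpow_inv_natCast (norm_nonneg k) hn]
      _ ≤ ‖a ^ n‖ ^ (1 / (n : ℝ)) := by gcongr
  have : ‖k‖ ≤ 0 := ge_of_tendsto ha ((eventually_ne_atTop 0).mono hle)
  exact norm_le_zero_iff.mp this

theorem IsApproxEigenvalue.exists_eigenvector {T K : E →L[𝕜] E} {r : 𝕜}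
    (hT : IsApproxEigenvalue T r) (hK : IsCompactOperator K) (hr : r ∉ spectrum 𝕜 (T - K)) :
    ∃ v ≠ 0, T v = r • v := by
  obtain ⟨U, hU⟩ := spectrum.notMem_iff.mp hr
  set R : E →L[𝕜] E := ↑U⁻¹
  have hR : ∀ x, R (K x - (T x - r • x)) = x := fun x => by
    have : K x - (T x - r • x) = (U : E →L[𝕜] E) x := by
      rw [hU]; simp [Algebra.algebraMap_eq_smul_one]; abel
    rw [this]
    exact DFunLike.congr_fun U.inv_mul x
  choose y hy1 hy using fun k : ℕ => hT (1 / (k + 1)) Nat.one_div_pos_of_nat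
  have hres : Tendsto (fun k => T (y k) - r • y k) atTop (𝓝 0) :=
    squeeze_zero_norm hy tendsto_one_div_add_atTop_nhds_zero_nat
  obtain ⟨C, hC, hKC⟩ := hK.image_closedBall_subset_compact 1
  obtain ⟨w, -, φ, hφ, hw⟩ :=
    hC.tendsto_subseq fun k => hKC ⟨y k, by simp [hy1], rfl⟩
  have hlim : Tendsto (y ∘ φ) atTop (𝓝 (R w)) := by
    have := (R.continuous.tendsto _).comp (hw.sub (hres.comp hφ.tendsto_atTop))
    simpa only [sub_zero, Function.comp_def, ContinuousLinearMap.coe_coe, hR] using this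
  refine ⟨R w, ?_, ?_⟩
  · have hnorm : ‖R w‖ = 1 :=
      tendsto_nhds_unique hlim.norm (by simp only [Function.comp_def, hy1, tendsto_const_nhds])
    exact norm_ne_zero_iff.mp (by rw [hnorm]; exact one_ne_zero)
  · have := tendsto_nhds_unique
      (((T.continuous.tendsto _).comp hlim).sub (hlim.const_smul r)) (hres.comp hφ.tendsto_atTop)
    exact sub_eq_zero.mp this

end Operators

section GrowthRate

open Finset

theorem frequently_le_mul_sum_range {b : ℕ → ℝ} (hb : ∀ m, 0 ≤ b m) (h0 : 0 < b 0)
    {q ε : ℝ} (hq : 0 < q) (hε : 0 < ε) (hqε : q < 1 + ε)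
    (hbdd : BddAbove (Set.range fun m => b m / q ^ m)) :
    ∃ᶠ N in atTop, b (N + 1) ≤ ε * ∑ m ∈ range (N + 1), b m := by
  rw [frequently_atTop]
  intro N₀
  by_contra! hgrow
  set S : ℕ → ℝ := fun N => ∑ m ∈ range (N + 1), b m with hS
  have hSpos : ∀ N, 0 < S N := fun N =>
    h0.trans_le (single_le_sum (fun m _ => hb m) (mem_range.mpr N.succ_pos))
  -- otherwise the partial sums grow at least like `(1 + ε) ^ N`, faster than `q ^ N`
  set v : ℕ → ℝ := fun k => S (N₀ + k) / q ^ (N₀ + k)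
  have hv : ∀ k, (1 + ε) / q * v k ≤ v (k + 1) := fun k => by
    have hstep : (1 + ε) * S (N₀ + k) ≤ S (N₀ + k + 1) := by
      have := hgrow (N₀ + k) (Nat.le_add_right _ _)
      simp only [hS, sum_range_succ _ (N₀ + k + 1)]
      linarith
    simp only [v, ← add_assoc, pow_succ]
    rw [div_mul_div_comm, mul_comm q]
    gcongr
  have hvlim : Tendsto v atTop atTop :=
    tendsto_atTop_of_geom_le (div_pos (hSpos _) (pow_pos hq _))
      ((one_lt_div hq).mpr hqε) hv
  obtain ⟨B, hB⟩ := hbdd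
  obtain ⟨k, hk⟩ := (hvlim.eventually_gt_atTop (B * q / ε)).exists
  have hbk : b (N₀ + k + 1) / q ^ (N₀ + k + 1) ≤ B := hB ⟨_, rfl⟩
  have := hgrow (N₀ + k) (Nat.le_add_right _ _)
  rw [div_lt_iff₀ hε] at hk
  rw [div_le_iff₀ (pow_pos hq _), pow_succ] at hbk
  have : v k * ε * q ^ (N₀ + k) = ε * S (N₀ + k) := by
    simp only [v]; field_simp
  nlinarith [pow_pos hq (N₀ + k)]

theorem exists_critical_growth_rate {a : ℕ → ℝ} (ha : ∀ m, 0 ≤ a m) {ρ M : ℝ} (hρ : 0 < ρ)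
    (hM : 0 < M) (hρa : ¬ BddAbove (Set.range fun m => a m / ρ ^ m))
    (hMa : BddAbove (Set.range fun m => a m / M ^ m)) :
    ∃ r > 0, ∀ ε > 0, ∃ l, r / (1 + ε) < l ∧ l ≤ r ∧
      ¬ BddAbove (Set.range fun m => a m / l ^ m) ∧
      BddAbove (Set.range fun m => a m / (l * (1 + ε)) ^ m) := by
  -- `sSup D` is the exponential growth rate `limsup (a m) ^ (1 / m)` of `a`
  set D : Set ℝ := {l | 0 < l ∧ ¬ BddAbove (Set.range fun m => a m / l ^ m)}
  have hρD : ρ ∈ D := ⟨hρ, hρa⟩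
  have hDM : M ∈ upperBounds D := by
    rintro l ⟨hl, hunb⟩
    by_contra! hMl
    obtain ⟨B, hB⟩ := hMa
    refine hunb ⟨B, Set.forall_mem_range.mpr fun m => le_trans ?_ (hB ⟨m, rfl⟩)⟩
    exact div_le_div_of_nonneg_left (ha m) (pow_pos hM m) (pow_le_pow_left₀ hM.le hMl.le m)
  have hr : 0 < sSup D := hρ.trans_le (le_csSup ⟨M, hDM⟩ hρD)
  refine ⟨sSup D, hr, fun ε hε => ?_⟩
  obtain ⟨l, ⟨hl, hunb⟩, hlt⟩ := exists_lt_of_lt_csSup ⟨ρ, hρD⟩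
    (div_lt_self hr (lt_add_of_pos_right 1 hε))
  refine ⟨l, hlt, le_csSup ⟨M, hDM⟩ ⟨hl, hunb⟩, hunb, ?_⟩
  by_contra hbdd
  have := le_csSup ⟨M, hDM⟩ (show l * (1 + ε) ∈ D from ⟨by positivity, hbdd⟩)
  rw [div_lt_iff₀ (by positivity)] at hlt
  linarith

end GrowthRate

open scoped lp

section LOne

variable {ι : Type*}

theorem hasSum_smul_map_single [DecidableEq ι] {F : Type*} [NormedAddCommGroup F]
    [NormedSpace ℝ F] (T : ℓ¹(ι, ℝ) →L[ℝ] F) (x : ℓ¹(ι, ℝ)) :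
    HasSum (fun j => x j • T (lp.single 1 j 1)) (T x) := by
  simpa [← map_smul, ← lp.single_smul] using (lp.hasSum_single ENNReal.one_ne_top x).mapL T

theorem ContinuousLinearMap.ext_lp_one_single [DecidableEq ι] {F : Type*} [NormedAddCommGroup F]
    [NormedSpace ℝ F] {A B : ℓ¹(ι, ℝ) →L[ℝ] F}
    (h : ∀ j, A (lp.single 1 j 1) = B (lp.single 1 j 1)) : A = B := by
  ext x
  exact (hasSum_smul_map_single A x).unique (by simpa only [h] using hasSum_smul_map_single B x)

theorem hasSum_mul_apply_single [DecidableEq ι] (T : ℓ¹(ι, ℝ) →L[ℝ] ℓ¹(ι, ℝ)) (x : ℓ¹(ι, ℝ))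
    (i : ι) : HasSum (fun j => x j * T (lp.single 1 j 1) i) (T x i) :=
  hasSum_smul_map_single ((lp.evalCLM ℝ _ 1 i).comp T) x

theorem lp.single_one_ne_zero [DecidableEq ι] (j : ι) : (lp.single 1 j 1 : ℓ¹(ι, ℝ)) ≠ 0 :=
  fun h => by simpa using congr($h j)

theorem lp.single_one_nonneg [DecidableEq ι] (j k : ι) :
    0 ≤ (lp.single 1 j (1 : ℝ) : ℓ¹(ι, ℝ)) k := by
  by_cases h : k = j <;> simp [h]

instance [Nonempty ι] : Nontrivial ℓ¹(ι, ℝ) := by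
  classical
  exact ⟨_, _, lp.single_one_ne_zero (Classical.arbitrary ι)⟩

theorem lp.not_finiteDimensional_one [Infinite ι] : ¬ FiniteDimensional ℝ ℓ¹(ι, ℝ) := by
  classical
  intro _
  apply Module.Finite.not_linearIndependent_of_infinite (R := ℝ)
    fun j => (lp.single 1 j 1 : ℓ¹(ι, ℝ))
  refine LinearIndependent.of_comp (LinearMap.pi fun i => (lp.evalCLM ℝ _ 1 i).toLinearMap) ?_
  convert Pi.linearIndependent_single_one ι ℝ using 1
  · rfl
  ext j i
  simp

theorem lp.norm_eq_tsum_of_nonneg {x : ℓ¹(ι, ℝ)} (hx : ∀ i, 0 ≤ x i) : ‖x‖ = ∑' i, x i := by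
  rw [lp.norm_eq_tsum_rpow (by norm_num)]
  simp [abs_of_nonneg (hx _)]

theorem lp.norm_sum_of_nonneg {α : Type*} (s : Finset α) (v : α → ℓ¹(ι, ℝ))
    (hv : ∀ m ∈ s, ∀ i, 0 ≤ v m i) : ‖∑ m ∈ s, v m‖ = ∑ m ∈ s, ‖v m‖ := by
  have hsum : ∀ i, 0 ≤ (∑ m ∈ s, v m) i := fun i => by
    rw [lp.coeFn_sum, Finset.sum_apply]
    exact Finset.sum_nonneg fun m hm => hv m hm i
  rw [lp.norm_eq_tsum_of_nonneg hsum, ← lp.tsumCLM_apply ℝ, map_sum]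
  exact Finset.sum_congr rfl fun m hm => by
    rw [lp.tsumCLM_apply, lp.norm_eq_tsum_of_nonneg (hv m hm)]

def supportSubspace (A : Set ι) : Submodule ℝ ℓ¹(ι, ℝ) where
  carrier := {x | ∀ i ∉ A, x i = 0}
  add_mem' hx hy i hi := by simp [hx i hi, hy i hi]
  zero_mem' _ _ := rfl
  smul_mem' c x hx i hi := by simp [hx i hi]

theorem isClosed_supportSubspace (A : Set ι) : IsClosed (supportSubspace A : Set ℓ¹(ι, ℝ)) := by
  simp only [supportSubspace, Submodule.coe_set_mk, AddSubmonoid.coe_set_mk,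
    AddSubsemigroup.coe_set_mk, Set.ofPred_forall]
  exact isClosed_iInter fun i => isClosed_iInter fun _ =>
    isClosed_eq (lp.evalCLM ℝ _ 1 i).continuous continuous_const

theorem map_mem_supportSubspace [DecidableEq ι] {T : ℓ¹(ι, ℝ) →L[ℝ] ℓ¹(ι, ℝ)} {A : Set ι}
    (hA : ∀ i j, j ∈ A → T (lp.single 1 j 1) i ≠ 0 → i ∈ A) {x : ℓ¹(ι, ℝ)}
    (hx : x ∈ supportSubspace A) : T x ∈ supportSubspace A := by
  intro i hi
  refine (hasSum_mul_apply_single T x i).unique ?_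
  convert hasSum_zero with j
  by_cases hj : j ∈ A
  · simp [not_imp_comm.mp (hA i j hj) hi]
  · simp [hx j hj]

def PreservesNonneg (T : ℓ¹(ι, ℝ) →L[ℝ] ℓ¹(ι, ℝ)) : Prop :=
  ∀ x : ℓ¹(ι, ℝ), (∀ i, 0 ≤ x i) → ∀ i, 0 ≤ T x i

namespace PreservesNonneg

variable {T : ℓ¹(ι, ℝ) →L[ℝ] ℓ¹(ι, ℝ)}

theorem of_single [DecidableEq ι] (h : ∀ i j, 0 ≤ T (lp.single 1 j 1) i) : PreservesNonneg T :=
  fun x hx i => (hasSum_mul_apply_single T x i).nonneg fun j => mul_nonneg (hx j) (h i j)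

theorem pow (hT : PreservesNonneg T) (n : ℕ) : PreservesNonneg (T ^ n) := by
  induction n with
  | zero => exact fun x hx => by simpa using hx
  | succ n ih => exact fun x hx => by rw [pow_succ']; exact hT _ (ih x hx)

theorem smul (hT : PreservesNonneg T) {c : ℝ} (hc : 0 ≤ c) : PreservesNonneg (c • T) :=
  fun x hx i => by simpa using mul_nonneg hc (hT x hx i)

theorem mul_single_le [DecidableEq ι] (hT : PreservesNonneg T) {x : ℓ¹(ι, ℝ)}
    (hx : ∀ i, 0 ≤ x i) (i j : ι) : x j * T (lp.single 1 j 1) i ≤ T x i := by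
  have hrest : ∀ k, 0 ≤ (x - x j • lp.single 1 j 1 : ℓ¹(ι, ℝ)) k := fun k => by
    rw [lp.coeFn_sub, lp.coeFn_smul, Pi.sub_apply, Pi.smul_apply]
    by_cases hk : k = j
    · simp [hk]
    · simp [hk, hx k]
  have := hT _ hrest i
  rw [map_sub, map_smul, lp.coeFn_sub, lp.coeFn_smul, Pi.sub_apply, Pi.smul_apply,
    smul_eq_mul, sub_nonneg] at this
  exact this

theorem exists_pow_apply_pos_of_transGen [DecidableEq ι] (hT : PreservesNonneg T) {j i : ι}
    (h : Relation.TransGen (fun j i => T (lp.single 1 j 1) i ≠ 0) j i) :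
    ∃ n, 0 < (T ^ (n + 1)) (lp.single 1 j 1) i := by
  induction h with
  | @single i hji =>
    exact ⟨0, by simpa using (hT _ (lp.single_one_nonneg j) i).lt_of_ne' hji⟩
  | @tail k i _ hki ih =>
    obtain ⟨n, hn⟩ := ih
    have hki : 0 < T (lp.single 1 k 1) i := (hT _ (lp.single_one_nonneg k) i).lt_of_ne' hki
    refine ⟨n + 1, (mul_pos hn hki).trans_le ?_⟩
    rw [pow_succ' T (n + 1)]
    exact hT.mul_single_le ((hT.pow _) _ (lp.single_one_nonneg j)) i k

theorem exists_pow_apply_single_self_pos [DecidableEq ι] [Infinite ι] (hT : PreservesNonneg T)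
    (hT' : ¬ HasNontrivialInvariantSubspace T) (j : ι) :
    ∃ n, 0 < (T ^ (n + 1)) (lp.single 1 j 1) j := by
  set A : Set ι := {i | Relation.TransGen (fun j i => T (lp.single 1 j 1) i ≠ 0) j i}
  by_cases hj : j ∈ A
  · exact hT.exists_pow_apply_pos_of_transGen hj
  have hA : ∀ x ∈ supportSubspace A, T x ∈ supportSubspace A := fun x =>
    map_mem_supportSubspace fun i k hk hki => Relation.TransGen.tail hk hki
  have hbot : supportSubspace A = ⊥ := by
    by_contra hne
    refine hT' ⟨_, isClosed_supportSubspace A, hne, fun htop => ?_, hA⟩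
    simpa using (htop ▸ Submodule.mem_top : lp.single 1 j 1 ∈ supportSubspace A) j hj
  have hTj : T (lp.single 1 j 1) ∈ supportSubspace A := fun i hi =>
    not_not.mp fun hji => hi (Relation.TransGen.single hji)
  rw [hbot, Submodule.mem_bot] at hTj
  exact absurd (hasNontrivialInvariantSubspace_of_eigenvector lp.not_finiteDimensional_one
    (lp.single_one_ne_zero j) (hTj.trans (zero_smul ℝ _).symm)) hT'

theorem exists_not_bddAbove_norm_pow_apply_div_pow [DecidableEq ι] (hT : PreservesNonneg T)
    {j : ι} {p : ℕ} (hp : p ≠ 0) (hc : 0 < (T ^ p) (lp.single 1 j 1) j) :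
    ∃ ρ > 0, ¬ BddAbove (Set.range fun m => ‖(T ^ m) (lp.single 1 j 1)‖ / ρ ^ m) := by
  set c := (T ^ p) (lp.single 1 j 1) j
  have hdiag : ∀ k, c ^ k ≤ (T ^ (p * k)) (lp.single 1 j 1) j := by
    intro k
    induction k with
    | zero => simp
    | succ k ih =>
      rw [pow_succ, mul_add, mul_one, add_comm, pow_add]
      exact (mul_le_mul_of_nonneg_right ih hc.le).trans
        ((hT.pow p).mul_single_le ((hT.pow _) _ (lp.single_one_nonneg j)) j j)
  -- any `ρ < min 1 c` works, since then `ρ ^ p ≤ ρ < c`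
  set ρ := min 1 c / 2 with hρ_def
  have hρ : 0 < ρ := by positivity
  have hρc : ρ ^ p < c := by
    have hρ1 : ρ < 1 := by linarith [min_le_left 1 c, lt_min one_pos hc]
    calc ρ ^ p ≤ ρ := pow_le_of_le_one hρ.le hρ1.le hp
      _ < c := by linarith [min_le_right 1 c, lt_min one_pos hc]
  refine ⟨ρ, hρ, fun ⟨B, hB⟩ => ?_⟩
  obtain ⟨k, hk⟩ := pow_unbounded_of_one_lt B ((one_lt_div (pow_pos hρ p)).mpr hρc)
  refine hk.not_ge (le_trans ?_ (hB ⟨p * k, rfl⟩))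
  show (c / ρ ^ p) ^ k ≤ ‖(T ^ (p * k)) (lp.single 1 j 1)‖ / ρ ^ (p * k)
  rw [div_pow, ← pow_mul]
  gcongr
  exact (hdiag k).trans ((le_abs_self _).trans
    (by simpa using lp.norm_apply_le_norm (E := fun _ : ι => ℝ) one_ne_zero _ j))

theorem exists_norm_eq_one_norm_sub_le (hT : PreservesNonneg T) {f : ℓ¹(ι, ℝ)}
    (hf : ∀ i, 0 ≤ f i) (hf0 : f ≠ 0) {l : ℝ} (hl : 0 < l) (r : ℝ) {δ : ℝ} (N : ℕ)
    (hN : ‖((l⁻¹ • T) ^ (N + 1)) f‖ + ‖f‖ ≤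
      δ * ∑ m ∈ Finset.range (N + 1), ‖((l⁻¹ • T) ^ m) f‖) :
    ∃ y : ℓ¹(ι, ℝ), ‖y‖ = 1 ∧ ‖T y - r • y‖ ≤ l * δ + |l - r| := by
  set U := l⁻¹ • T
  set x := ∑ m ∈ Finset.range (N + 1), (U ^ m) f
  have hx : ‖x‖ = ∑ m ∈ Finset.range (N + 1), ‖(U ^ m) f‖ :=
    lp.norm_sum_of_nonneg _ _ fun m _ => ((hT.smul (inv_nonneg.mpr hl.le)).pow m) f hf
  have hxpos : 0 < ‖x‖ := by
    rw [hx]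
    exact (norm_pos_iff.mpr hf0).trans_le (by
      simpa using Finset.single_le_sum (fun m _ => norm_nonneg ((U ^ m) f))
        (Finset.mem_range.mpr N.succ_pos))
  have htel : U x - x = (U ^ (N + 1)) f - f := by
    have := congr($(mul_geom_sum U (N + 1)) f)
    simp only [mul_apply_eq_comp, sub_apply, one_apply_eq_self, sum_apply] at this
    exact this
  have hTU : T = l • U := by simp [U, smul_smul, hl.ne']
  refine ⟨‖x‖⁻¹ • x, by simpa using norm_smul_inv_norm (𝕜 := ℝ) (norm_pos_iff.mp hxpos), ?_⟩
  have hdecomp : T (‖x‖⁻¹ • x) - r • (‖x‖⁻¹ • x) =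
      ‖x‖⁻¹ • (l • ((U ^ (N + 1)) f - f) + (l - r) • x) := by
    rw [← htel, hTU]
    simp only [map_smul, smul_apply]
    module
  rw [hdecomp, norm_smul, norm_inv, norm_norm, inv_mul_le_iff₀ hxpos]
  calc ‖l • ((U ^ (N + 1)) f - f) + (l - r) • x‖
      ≤ l * (‖(U ^ (N + 1)) f‖ + ‖f‖) + |l - r| * ‖x‖ := by
        refine (norm_add_le _ _).trans (add_le_add ?_ (by rw [norm_smul, Real.norm_eq_abs]))
        rw [norm_smul, Real.norm_of_nonneg hl.le]
        exact mul_le_mul_of_nonneg_left (norm_sub_le _ _) hl.le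
    _ ≤ l * (δ * ‖x‖) + |l - r| * ‖x‖ := by rw [hx]; gcongr
    _ = ‖x‖ * (l * δ + |l - r|) := by ring

theorem exists_pos_isApproxEigenvalue (hT : PreservesNonneg T) {f : ℓ¹(ι, ℝ)}
    (hf : ∀ i, 0 ≤ f i) (hf0 : f ≠ 0) {ρ : ℝ} (hρ : 0 < ρ)
    (hgrowth : ¬ BddAbove (Set.range fun m => ‖(T ^ m) f‖ / ρ ^ m)) :
    ∃ r > 0, IsApproxEigenvalue T r := by
  set a : ℕ → ℝ := fun m => ‖(T ^ m) f‖
  have hbound : BddAbove (Set.range fun m => a m / (‖T‖ + 1) ^ m) := by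
    refine ⟨‖f‖, Set.forall_mem_range.mpr fun m => ?_⟩
    have hle : a m ≤ (‖T‖ + 1) ^ m * a 0 := le_geom (by positivity) m fun k _ =>
      calc a (k + 1) = ‖T ((T ^ k) f)‖ := by rw [← mul_apply_eq_comp, ← pow_succ']
        _ ≤ ‖T‖ * a k := T.le_opNorm _
        _ ≤ (‖T‖ + 1) * a k := by gcongr; linarith
    rw [div_le_iff₀ (by positivity)]
    simpa [a, mul_comm] using hle
  obtain ⟨r, hr, hcrit⟩ :=
    exists_critical_growth_rate (fun m => norm_nonneg _) hρ (by positivity) hgrowth hbound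
  refine ⟨r, hr, fun ε₀ hε₀ => ?_⟩
  set ε := ε₀ / (4 * r)
  have hε : 0 < ε := by positivity
  obtain ⟨l, hrl, hlr, hunb, hbdd⟩ := hcrit ε hε
  have hl : 0 < l := (by positivity : 0 < r / (1 + ε)).trans hrl
  set b : ℕ → ℝ := fun m => ‖((l⁻¹ • T) ^ m) f‖
  have hb : ∀ m, b m = a m / l ^ m := fun m => by
    simp [b, a, smul_pow, norm_smul, div_eq_inv_mul, abs_of_pos hl]
  set S : ℕ → ℝ := fun N => ∑ m ∈ Finset.range (N + 1), b m
  have hfreq : ∃ᶠ N in atTop, b (N + 1) ≤ 2 * ε * S N :=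
    frequently_le_mul_sum_range (b := b) (q := 1 + ε) (fun m => norm_nonneg _)
      (by simpa [b] using hf0) (by positivity) (by positivity) (by linarith)
      (by convert hbdd using 3 with m; rw [hb, div_div, mul_pow])
  have hSlarge : ∀ᶠ N in atTop, ‖f‖ ≤ ε * S N := by
    have hmono : Monotone S := fun N N' h =>
      Finset.sum_le_sum_of_subset_of_nonneg (Finset.range_mono (Nat.succ_le_succ h))
        fun _ _ _ => norm_nonneg _
    have hSunb : ¬ BddAbove (Set.range S) := fun ⟨B, hB⟩ =>
      hunb ⟨B, Set.forall_mem_range.mpr fun m => (hb m) ▸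
        (Finset.single_le_sum (f := b) (fun _ _ => norm_nonneg _)
          (Finset.self_mem_range_succ m)).trans (hB ⟨m, rfl⟩)⟩
    filter_upwards [(tendsto_atTop_atTop_of_monotone' hmono hSunb).eventually_ge_atTop (‖f‖ / ε)]
      with N hN
    rwa [div_le_iff₀ hε, mul_comm] at hN
  obtain ⟨N, hN₁, hN₂⟩ := (hfreq.and_eventually hSlarge).exists
  obtain ⟨y, hy1, hy⟩ :=
    hT.exists_norm_eq_one_norm_sub_le hf hf0 hl r (δ := 3 * ε) N
      (by simp only [b, S] at hN₁ hN₂; linarith)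
  refine ⟨y, hy1, hy.trans ?_⟩
  have hrl' : r - l ≤ r * ε := by
    rw [div_lt_iff₀ (by positivity)] at hrl
    nlinarith
  rw [abs_of_nonpos (by linarith)]
  calc l * (3 * ε) + -(l - r) ≤ r * (3 * ε) + r * ε := by nlinarith
    _ = ε₀ := by simp only [ε]; field_simp; ring

end PreservesNonneg

end LOne

theorem positive_part_has_invariant_subspace_general
    (S Sneg Spos : lp (fun _ : ℕ => ℝ) 1 →L[ℝ] lp (fun _ : ℕ => ℝ) 1)
    -- `S` is quasinilpotent
    (hq : Tendsto (fun n : ℕ => ‖S ^ n‖ ^ (1 / (n : ℝ))) atTop (nhds 0))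
    -- `Sneg` is the negative part `S⁻`, and it is compact
    (hneg : ∀ i j : ℕ, Sneg (lp.single 1 j 1) i = max (-(S (lp.single 1 j 1) i)) 0)
    (hcpt : IsCompactOperator Sneg)
    -- `Spos` is the positive part `S⁺`
    (hpos : ∀ i j : ℕ, Spos (lp.single 1 j 1) i = max (S (lp.single 1 j 1) i) 0) :
    ∃ J : Submodule ℝ (lp (fun _ : ℕ => ℝ) 1),
      IsClosed (J : Set (lp (fun _ : ℕ => ℝ) 1)) ∧ J ≠ ⊥ ∧ J ≠ ⊤ ∧
      ∀ x ∈ J, Spos x ∈ J := by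
  have hSpos : PreservesNonneg Spos := .of_single fun i j => hpos i j ▸ le_max_right _ _
  have hS : Spos - Sneg = S := ContinuousLinearMap.ext_lp_one_single fun j =>
    lp.ext <| funext fun i => by simp [hpos, hneg]
  by_contra hinv
  obtain ⟨n, hn⟩ := hSpos.exists_pow_apply_single_self_pos hinv 0
  obtain ⟨ρ, hρ, hgrowth⟩ := hSpos.exists_not_bddAbove_norm_pow_apply_div_pow n.succ_ne_zero hn
  obtain ⟨r, hr, happrox⟩ := hSpos.exists_pos_isApproxEigenvalue (lp.single_one_nonneg 0)
    (lp.single_one_ne_zero 0) hρ hgrowth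
  have hrS : r ∉ spectrum ℝ (Spos - Sneg) :=
    hS ▸ fun h => hr.ne' (spectrum_subset_zero_of_tendsto hq h)
  obtain ⟨v, hv, hSv⟩ := happrox.exists_eigenvector hcpt hrS
  exact hinv (hasNontrivialInvariantSubspace_of_eigenvector lp.not_finiteDimensional_one hv hSv)

/-- If `S` is a quasinilpotent operator on `ℓ¹` with no nontrivial closed invariant
ideal and whose negative part `S⁻` is compact, then the positive part `S⁺` has a
nontrivial closed invariant subspace. -/
theorem positive_part_has_invariant_subspace
    (S Sneg Spos : lp (fun _ : ℕ => ℝ) 1 →L[ℝ] lp (fun _ : ℕ => ℝ) 1)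
    -- `S` is quasinilpotent
    (hq : Tendsto (fun n : ℕ => ‖S ^ n‖ ^ (1 / (n : ℝ))) atTop (nhds 0))
    -- `S` has no nontrivial closed invariant ideal
    (hni : ¬ ∃ J : Submodule ℝ (lp (fun _ : ℕ => ℝ) 1),
      IsClosed (J : Set (lp (fun _ : ℕ => ℝ) 1)) ∧ J ≠ ⊥ ∧ J ≠ ⊤ ∧
      (∀ x ∈ J, S x ∈ J) ∧
      (∀ x ∈ J, ∀ y : lp (fun _ : ℕ => ℝ) 1, (∀ i, |y i| ≤ |x i|) → y ∈ J))
    -- `Sneg` is the negative part `S⁻`, and it is compact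
    (hneg : ∀ i j : ℕ, Sneg (lp.single 1 j 1) i = max (-(S (lp.single 1 j 1) i)) 0)
    (hcpt : IsCompactOperator Sneg)
    -- `Spos` is the positive part `S⁺`
    (hpos : ∀ i j : ℕ, Spos (lp.single 1 j 1) i = max (S (lp.single 1 j 1) i) 0) :
    ∃ J : Submodule ℝ (lp (fun _ : ℕ => ℝ) 1),
      IsClosed (J : Set (lp (fun _ : ℕ => ℝ) 1)) ∧ J ≠ ⊥ ∧ J ≠ ⊤ ∧
      ∀ x ∈ J, Spos x ∈ J :=
  positive_part_has_invariant_subspace_general S Sneg Spos hq hneg hcpt hpos
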